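/- Let M = lim←_ψ E[[X]] be the set of sequences (m_0, m_1, …) with m_i ∈ E[[X]] and ψ(m_{i+1}) = m_i, where ψ : E[[X]] → E[[X]] is defined by f = Σ_{i=0}^{p-1} φ(f_i)(1+X)^i ↦ f_0 and φ(f)(X) = f(X^p). Equip M with the Z_p^×-action (g·m)_i = g·m_i, the E[[X]]-module structure (f·m)_i = φ^i(f)·m_i, and the X-adic valuation. Then M^{Γ_k-sh,k} = i(E[[X]]), where i(f) = (f, φ(f), φ²(f), …). -/

import Mathlib

open PowerSeries

/-- The binomial coefficient `C(z,n)` of a `p`-adic integer `z`, reduced modulo `p`. -/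
noncomputable def binomMod (p : ℕ) [Fact p.Prime] (E : Type*) [Field E] [CharP E p]
    (z : ℤ_[p]) (n : ℕ) : E :=
  ZMod.castHom dvd_rfl E (((z.appr (n + 1)).choose n : ZMod p))

/-- The power series `(1+X)^a = ∑ C(a,n) X^n ∈ E[[X]]` for `a ∈ ℤ_p`. -/
noncomputable def onePlusXPow (p : ℕ) [Fact p.Prime] (E : Type*) [Field E] [CharP E p]
    (a : ℤ_[p]) : PowerSeries E :=
  PowerSeries.mk fun n => binomMod p E a n

/-- The Frobenius `φ : f(X) ↦ f(X^p)` on `E[[X]]`. -/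
noncomputable def expandP (p : ℕ) (E : Type*) [Field E] (f : PowerSeries E) : PowerSeries E :=
  PowerSeries.mk fun k => if p ∣ k then PowerSeries.coeff (k / p) f else 0

/-!
For `g = 1 + p^ℓ·u` the substitution `X ↦ g·X` moves `X` only by `X^{p^ℓ}`, because
`(1+X)^{p^ℓ} = 1 + X^{p^ℓ}` in characteristic `p`; for `g = 1 + p^ℓ` exactly,
`g·X = X + W` with `W = X^{p^ℓ}(1+X)`. A first-order Taylor expansion gives
`g·f - f ≡ f'·W mod X^{2p^ℓ}`. For `j ≥ 1` the super-Hölder bound makes `g·m_j - m_j`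
divisible by `X^{(p^ℓ - O(1))·p^j}`, well beyond `X^{2p^ℓ}`, so `m_j'` is divisible by ever
higher powers of `X` as `ℓ → ∞`; hence `m_j' = 0`, i.e. `m_j = φ(h)`, and then
`h = ψ(m_j) = m_{j-1}`. Conversely `φ^j f` is a series in `X^{p^j}`, and
`(g·X)^{p^j} - X^{p^j} = (g·X - X)^{p^j}` is divisible by `X^{p^ℓ·p^j}`.
-/

instance PowerSeries.charP {R : Type*} [CommSemiring R] (p : ℕ) [CharP R p] : CharP R⟦X⟧ p :=
  charP_of_injective_algebraMap (by rw [algebraMap_eq]; exact C_injective) p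

theorem natCast_rpow_natCast_add (p k i : ℕ) :
    (p : ℝ) ^ ((k : ℝ) + (i : ℝ)) = ((p ^ (k + i) : ℕ) : ℝ) := by
  rw [← Nat.cast_add, Real.rpow_natCast, Nat.cast_pow]

theorem PowerSeries.coeff_one_add_X_pow {R : Type*} [Semiring R] (b n : ℕ) :
    coeff n ((1 + X : R⟦X⟧) ^ b) = b.choose n := by
  rw [← Polynomial.coeff_one_add_X_pow R b n, ← Polynomial.coeff_coe]
  push_cast
  rfl

theorem PowerSeries.eq_zero_of_forall_X_pow_dvd {R : Type*} [Semiring R] {f : R⟦X⟧}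
    (h : ∀ n, X ^ n ∣ f) : f = 0 :=
  ext fun n => X_pow_dvd_iff.mp (h (n + 1)) n n.lt_succ_self

section Binomial

variable {p : ℕ} [Fact p.Prime]

theorem Nat.choose_modEq_choose_of_modEq {r a b n : ℕ} (hn : n < p ^ r)
    (h : a ≡ b [MOD p ^ r]) : (a.choose n : ℤ) ≡ b.choose n [ZMOD p] := by
  have digits : ∀ i < r, a / p ^ i % p = b / p ^ i % p := by
    intro i hi
    have hdvd : p ^ i * p ∣ p ^ r := by rw [← pow_succ]; exact pow_dvd_pow p hi
    rw [← Nat.mod_mul_right_div_self, ← Nat.mod_mul_right_div_self, ← Nat.mod_mod_of_dvd a hdvd,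
      ← Nat.mod_mod_of_dvd b hdvd, h]
  have lucas := fun c =>
    Choose.choose_modEq_choose_mul_prod_range_choose (n := c) (k := n) (p := p) r
  simp only [Nat.div_eq_of_lt hn, Nat.choose_zero_right, Nat.cast_one, one_mul] at lucas
  refine (lucas a).trans (Int.ModEq.trans ?_ (lucas b).symm)
  rw [Finset.prod_congr rfl fun i hi => by rw [digits i (Finset.mem_range.mp hi)]]

variable {E : Type*} [Field E] [CharP E p]

theorem binomMod_eq_choose {z : ℤ_[p]} {b n r : ℕ} (hn : n < p ^ r)
    (h : (p : ℤ_[p]) ^ r ∣ z - b) : binomMod p E z n = b.choose n := by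
  set a := z.appr (n + 1)
  have hs : n < p ^ min r (n + 1) := by
    rcases min_choice r (n + 1) with hs | hs <;> rw [hs]
    exacts [hn, by have := Nat.lt_pow_self (n := n + 1) (Fact.out : p.Prime).one_lt; omega]
  have ha : (p : ℤ_[p]) ^ min r (n + 1) ∣ z - a :=
    (pow_dvd_pow _ (min_le_right _ _)).trans
      (Ideal.mem_span_singleton.mp (PadicInt.appr_spec (n + 1) z))
  have hab : a ≡ b [MOD p ^ min r (n + 1)] := by
    rw [Nat.modEq_iff_dvd, Nat.cast_pow, ← PadicInt.pow_p_dvd_int_iff]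
    push_cast
    convert dvd_sub ha ((pow_dvd_pow _ (min_le_left _ _)).trans h) using 1
    ring
  rw [binomMod, map_natCast, ← Int.cast_natCast, ← Int.cast_natCast (R := E) (b.choose n),
    CharP.intCast_eq_intCast E p]
  exact Nat.choose_modEq_choose_of_modEq hs hab

theorem onePlusXPow_natCast (b : ℕ) : onePlusXPow p E b = (1 + X) ^ b := by
  have hn : ∀ n, n < p ^ (n + 1) := fun n => by
    have := Nat.lt_pow_self (n := n + 1) (Fact.out : p.Prime).one_lt
    omega
  ext n
  rw [onePlusXPow, coeff_mk, coeff_one_add_X_pow,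
    binomMod_eq_choose (z := b) (hn n) (by rw [sub_self]; exact dvd_zero _)]

theorem onePlusXPow_one_add_p_pow_sub_one (ℓ : ℕ) :
    onePlusXPow p E (1 + (p : ℤ_[p]) ^ ℓ) - 1 = X + X ^ p ^ ℓ * (1 + X) := by
  rw [show (1 + (p : ℤ_[p]) ^ ℓ) = ((1 + p ^ ℓ : ℕ) : ℤ_[p]) by push_cast; rfl,
    onePlusXPow_natCast, pow_add, pow_one, add_pow_char_pow, one_pow]
  ring

theorem X_pow_dvd_onePlusXPow_sub {z : ℤ_[p]} {ℓ : ℕ} (hz : (p : ℤ_[p]) ^ ℓ ∣ z - 1) :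
    X ^ p ^ ℓ ∣ onePlusXPow p E z - (1 + X) := by
  refine X_pow_dvd_iff.mpr fun n hn => ?_
  rw [map_sub, onePlusXPow, coeff_mk, ← pow_one (1 + X), coeff_one_add_X_pow,
    binomMod_eq_choose hn (by rwa [Nat.cast_one]), sub_self]

end Binomial

theorem PadicInt.isUnit_one_add_p_pow {p : ℕ} [Fact p.Prime] {ℓ : ℕ} (hℓ : ℓ ≠ 0) :
    IsUnit (1 + (p : ℤ_[p]) ^ ℓ) := by
  refine IsLocalRing.isUnit_of_mem_nonunits_one_sub_self _ ?_
  rw [sub_add_cancel_left, mem_nonunits, norm_neg, norm_pow, norm_p]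
  exact pow_lt_one₀ (by positivity)
    (inv_lt_one_of_one_lt₀ (by exact_mod_cast (Fact.out : p.Prime).one_lt)) hℓ

section ContinuousEndomorphism

variable {R : Type*} [CommRing R]

theorem PowerSeries.X_pow_dvd_sub_trunc (n : ℕ) (f : R⟦X⟧) : X ^ n ∣ f - (trunc n f : R⟦X⟧) :=
  ⟨_, sub_eq_iff_eq_add.mpr (eq_X_pow_mul_shift_add_trunc n f)⟩

theorem X_pow_dvd_map_of_X_pow_dvd (τ : R⟦X⟧ →+* R⟦X⟧) (hX : X ∣ τ X) {f : R⟦X⟧} {n : ℕ}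
    (hf : X ^ n ∣ f) : X ^ n ∣ τ f := by
  obtain ⟨g, rfl⟩ := hf
  rw [map_mul, map_pow]
  exact (pow_dvd_pow_of_dvd hX n).mul_right _

theorem X_pow_dvd_map_sub_self_sub_trunc (τ : R⟦X⟧ →+* R⟦X⟧) (hC : ∀ c : R, τ (C c) = C c)
    (hX : X ∣ τ X) (f : R⟦X⟧) (n : ℕ) :
    X ^ n ∣ τ f - f - ((trunc n f).eval₂ C (τ X) - (trunc n f).eval₂ C X) := by
  have hτ : τ ((trunc n f).eval₂ C X) = (trunc n f).eval₂ C (τ X) := by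
    rw [Polynomial.hom_eval₂, show τ.comp C = C from RingHom.ext hC]
  have hf := X_pow_dvd_sub_trunc n f
  rw [← Polynomial.eval₂_C_X_eq_coe] at hf
  convert dvd_sub (X_pow_dvd_map_of_X_pow_dvd τ hX hf) hf using 1
  rw [map_sub, hτ]
  ring

theorem X_pow_dvd_map_sub_self_sub_derivative_mul (τ : R⟦X⟧ →+* R⟦X⟧)
    (hC : ∀ c : R, τ (C c) = C c) (hX : X ∣ τ X) {W : R⟦X⟧} {q : ℕ} (hτX : τ X = X + W)
    (hW : X ^ q ∣ W) (f : R⟦X⟧) :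
    X ^ (2 * q) ∣ τ f - f - d⁄dX R f * W := by
  set P := trunc (2 * q) f
  set f' : R⟦X⟧ := (trunc (2 * q - 1) (d⁄dX R f) : R⟦X⟧)
  obtain ⟨k, hk⟩ := (P.map C).binomExpansion X W
  have hP' : (P.map C).derivative.eval X = f' := by
    rw [Polynomial.derivative_map, Polynomial.eval_map, Polynomial.eval₂_C_X_eq_coe]
    exact congrArg _ (trunc_derivative' f _).symm
  have taylor : P.eval₂ C (τ X) - P.eval₂ C X = f' * W + k * W ^ 2 := by
    rw [hτX, ← Polynomial.eval_map, ← Polynomial.eval_map, hk, hP']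
    ring
  have hlin : X ^ (2 * q) ∣ (d⁄dX R f - f') * W :=
    (pow_dvd_pow X (by omega)).trans
      (pow_add (X : R⟦X⟧) _ q ▸ mul_dvd_mul (X_pow_dvd_sub_trunc _ _) hW)
  have hquad : X ^ (2 * q) ∣ k * W ^ 2 :=
    Dvd.dvd.mul_left (by rw [mul_comm, pow_mul]; exact pow_dvd_pow_of_dvd hW 2) k
  convert dvd_add (dvd_sub (X_pow_dvd_map_sub_self_sub_trunc τ hC hX f _) hlin) hquad using 1
  rw [taylor]
  ring

theorem X_pow_dvd_derivative_of_X_pow_dvd_map_sub_self [IsDomain R] (τ : R⟦X⟧ →+* R⟦X⟧)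
    (hC : ∀ c : R, τ (C c) = C c) (hX : X ∣ τ X) {q e : ℕ} (he : e ≤ q)
    (hτX : τ X = X + X ^ q * (1 + X)) {f : R⟦X⟧} (h : X ^ (q + e) ∣ τ f - f) :
    X ^ e ∣ d⁄dX R f := by
  have hder := (pow_dvd_pow X (by omega : q + e ≤ 2 * q)).trans
    (X_pow_dvd_map_sub_self_sub_derivative_mul τ hC hX hτX (dvd_mul_right _ _) f)
  have h' := dvd_sub h hder
  rw [sub_sub_cancel, pow_add, mul_left_comm,
    mul_dvd_mul_iff_left (pow_ne_zero _ X_ne_zero)] at h'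
  exact (IsUnit.dvd_mul_right (isUnit_iff_constantCoeff.mpr (by simp))).mp h'

theorem Polynomial.pow_sub_pow_dvd_eval₂_sub_eval₂ {S : Type*} [CommRing S] (g : R →+* S)
    {P : Polynomial R} {s : ℕ} (hP : ∀ i, ¬ s ∣ i → P.coeff i = 0) (x y : S) :
    y ^ s - x ^ s ∣ P.eval₂ g y - P.eval₂ g x := by
  rw [eval₂_eq_sum_range, eval₂_eq_sum_range, ← Finset.sum_sub_distrib]
  refine Finset.dvd_sum fun i _ => ?_
  rw [← mul_sub]
  by_cases hi : s ∣ i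
  · obtain ⟨t, rfl⟩ := hi
    rw [pow_mul, pow_mul]
    exact (sub_dvd_pow_sub_pow _ _ t).mul_left _
  · simp [hP i hi]

theorem X_pow_mul_dvd_map_sub_self {p : ℕ} [Fact p.Prime] [CharP R p] (τ : R⟦X⟧ →+* R⟦X⟧)
    (hC : ∀ c : R, τ (C c) = C c) {s j : ℕ} (hs : s ≠ 0) (hτX : X ^ s ∣ τ X - X)
    {f : R⟦X⟧} (hf : ∀ n, ¬ p ^ j ∣ n → coeff n f = 0) :
    X ^ (s * p ^ j) ∣ τ f - f := by
  have hX : X ∣ τ X := dvd_sub_self_right.mp ((dvd_pow_self X hs).trans hτX)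
  have hsupp : ∀ i, ¬ p ^ j ∣ i → (trunc (s * p ^ j) f).coeff i = 0 := fun i hi => by
    simp [coeff_trunc, hf i hi]
  have hP : X ^ (s * p ^ j) ∣
      (trunc (s * p ^ j) f).eval₂ C (τ X) - (trunc (s * p ^ j) f).eval₂ C X := by
    refine dvd_trans ?_ (Polynomial.pow_sub_pow_dvd_eval₂_sub_eval₂ C hsupp _ _)
    rw [← sub_pow_char_pow, pow_mul]
    exact pow_dvd_pow_of_dvd hτX _
  simpa using dvd_add (X_pow_dvd_map_sub_self_sub_trunc τ hC hX f _) hP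

end ContinuousEndomorphism

section Frobenius

variable {p : ℕ} {E : Type*} [Field E]

theorem coeff_expandP_iterate [NeZero p] (f : E⟦X⟧) (j n : ℕ) :
    coeff n ((expandP p E)^[j] f) = if p ^ j ∣ n then coeff (n / p ^ j) f else 0 := by
  induction j generalizing n with
  | zero => simp
  | succ j ih =>
    rw [Function.iterate_succ_apply', expandP, coeff_mk]
    by_cases hn : p ∣ n
    · obtain ⟨t, rfl⟩ := hn
      have hp := NeZero.pos p
      simp only [dvd_mul_right, if_true, ih, Nat.mul_div_cancel_left t hp, pow_succ',
        Nat.mul_dvd_mul_iff_left hp, Nat.mul_div_mul_left _ _ hp]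
    · rw [if_neg hn, if_neg fun h => hn ((dvd_pow_self p j.succ_ne_zero).trans h)]

theorem exists_eq_expandP_of_derivative_eq_zero [CharP E p] {f : E⟦X⟧} (hf : d⁄dX E f = 0) :
    ∃ h, f = expandP p E h := by
  refine ⟨mk fun n => coeff (p * n) f, ext fun n => ?_⟩
  rw [expandP, coeff_mk]
  split_ifs with hn
  · rw [coeff_mk, Nat.mul_div_cancel' hn]
  · obtain ⟨n, rfl⟩ := Nat.exists_eq_succ_of_ne_zero (by rintro rfl; exact hn (dvd_zero p) : n ≠ 0)
    have hcoeff := congrArg (coeff n) hf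
    rw [coeff_derivative, map_zero, ← Nat.cast_succ] at hcoeff
    exact (mul_eq_zero.mp hcoeff).resolve_right ((CharP.cast_eq_zero_iff E p _).not.mpr hn)

theorem psi_expandP [NeZero p] {ψ : E⟦X⟧ → E⟦X⟧}
    (hψ : ∀ F : Fin p → E⟦X⟧, ψ (∑ i : Fin p, expandP p E (F i) * (1 + X) ^ (i : ℕ)) = F 0)
    (f : E⟦X⟧) : ψ (expandP p E f) = f := by
  have hzero : expandP p E 0 = 0 := by ext; simp [expandP]
  have h := hψ (Pi.single 0 f)
  rw [Fintype.sum_eq_single 0 fun i hi => by rw [Pi.single_eq_of_ne hi, hzero, zero_mul]] at h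
  simpa using h

end Frobenius

theorem X_pow_dvd_map_sub_self_expandP_iterate {p : ℕ} [Fact p.Prime] {E : Type*} [Field E]
    [CharP E p] (τ : E⟦X⟧ →+* E⟦X⟧) (hC : ∀ c : E, τ (C c) = C c) {z : ℤ_[p]} {ℓ : ℕ}
    (hz : (p : ℤ_[p]) ^ ℓ ∣ z - 1) (hτX : τ X = onePlusXPow p E z - 1) (f : E⟦X⟧) (j : ℕ) :
    X ^ (p ^ ℓ * p ^ j) ∣ τ ((expandP p E)^[j] f) - (expandP p E)^[j] f := by
  refine X_pow_mul_dvd_map_sub_self τ hC (pow_ne_zero _ (Fact.out : p.Prime).ne_zero) ?_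
    fun n hn => by rw [coeff_expandP_iterate, if_neg hn]
  rw [hτX, sub_sub]
  exact X_pow_dvd_onePlusXPow_sub hz

theorem derivative_eq_zero_of_superHolder {p : ℕ} [Fact p.Prime] {E : Type*} [Field E]
    [CharP E p] {k : ℕ} (σ : ℤ_[p]ˣ →* RingAut E⟦X⟧)
    (hσX : ∀ g : ℤ_[p]ˣ, σ g X = onePlusXPow p E (g : ℤ_[p]) - 1)
    (hσC : ∀ (g : ℤ_[p]ˣ) (c : E), σ g (C c) = C c) {μ : ℝ} {J : ℕ} (hJ : J ≠ 0) {f : E⟦X⟧}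
    (H : ∀ (i : ℕ) (g : ℤ_[p]ˣ), (∃ b : ℤ_[p], (g : ℤ_[p]) = 1 + (p : ℤ_[p]) ^ (k + i) * b) →
      ∀ c : ℕ, (c : ℝ) ≤ (p : ℝ) ^ ((k : ℝ) + (i : ℝ)) + μ → X ^ (c * p ^ J) ∣ σ g f - f) :
    d⁄dX E f = 0 := by
  refine eq_zero_of_forall_X_pow_dvd fun N => ?_
  set d := ⌈-μ⌉₊
  set i := N + 2 * d + 1
  set q := p ^ (k + i)
  have hp := (Fact.out : p.Prime).two_le
  have hq : i < q :=
    (Nat.lt_pow_self (by omega)).trans_le (Nat.pow_le_pow_right (by omega) (by omega))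
  obtain ⟨g, hg⟩ := PadicInt.isUnit_one_add_p_pow (p := p) (ℓ := k + i) (by omega)
  have hgX : (σ g : E⟦X⟧ →+* E⟦X⟧) X = X + X ^ q * (1 + X) := by
    rw [RingEquiv.coe_toRingHom, hσX, hg, onePlusXPow_one_add_p_pow_sub_one]
  have hX : X ∣ (σ g : E⟦X⟧ →+* E⟦X⟧) X :=
    hgX ▸ dvd_add dvd_rfl ((dvd_pow_self X (by positivity)).mul_right _)
  have hc : ((q - d : ℕ) : ℝ) ≤ (p : ℝ) ^ ((k : ℝ) + (i : ℝ)) + μ := by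
    rw [natCast_rpow_natCast_add, Nat.cast_sub (by omega)]
    linarith [Nat.le_ceil (-μ)]
  have hdvd := H i g ⟨1, by rw [hg, mul_one]⟩ (q - d) hc
  have hle : q + (q - 2 * d) ≤ (q - d) * p ^ J := by
    have := Nat.mul_le_mul_left (q - d) (hp.trans (Nat.le_self_pow hJ p))
    omega
  exact (pow_dvd_pow X (by omega)).trans (X_pow_dvd_derivative_of_X_pow_dvd_map_sub_self
    (σ g) (hσC g) hX (by omega) hgX ((pow_dvd_pow X hle).trans hdvd))

theorem psi_limit_superHolder_general
    {p : ℕ} [Fact p.Prime] {E : Type*} [Field E] [CharP E p]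
    (k : ℕ)
    -- the operator `ψ`, left inverse of `φ`
    (ψ : PowerSeries E → PowerSeries E)
    (hψ : ∀ F : Fin p → PowerSeries E,
      ψ (∑ i : Fin p, expandP p E (F i) * (1 + X) ^ (i : ℕ)) = F 0)
    -- the action of `ℤ_pˣ` on `E[[X]]`, `a·f(X) = f((1+X)^a - 1)`
    (σ : ℤ_[p]ˣ →* RingAut (PowerSeries E))
    (hσX : ∀ g : ℤ_[p]ˣ, σ g X = onePlusXPow p E (g : ℤ_[p]) - 1)
    (hσC : ∀ (g : ℤ_[p]ˣ) (c : E), σ g (PowerSeries.C c) = PowerSeries.C c)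
    -- an element `m` of `M = lim←_ψ E[[X]]`
    (m : ℕ → PowerSeries E) (hm : ∀ j : ℕ, ψ (m (j + 1)) = m j) :
    (∃ mu : ℝ, ∀ (i : ℕ) (g : ℤ_[p]ˣ),
        (∃ b : ℤ_[p], (g : ℤ_[p]) = 1 + (p : ℤ_[p]) ^ (k + i) * b) →
        ∀ c : ℕ, (c : ℝ) ≤ (p : ℝ) ^ ((k : ℝ) + (i : ℝ)) + mu →
          ∀ j : ℕ, (X : PowerSeries E) ^ (c * p ^ j) ∣ (σ g (m j) - m j)) ↔
    (∃ f : PowerSeries E, ∀ j : ℕ, m j = (expandP p E)^[j] f) := by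
  constructor
  · rintro ⟨μ, H⟩
    have hstep : ∀ j, m (j + 1) = expandP p E (m j) := fun j => by
      obtain ⟨h, hh⟩ := exists_eq_expandP_of_derivative_eq_zero
        (derivative_eq_zero_of_superHolder σ hσX hσC j.succ_ne_zero
          fun i g hg c hc => H i g hg c hc (j + 1))
      rw [← hm j, hh, psi_expandP hψ]
    refine ⟨m 0, fun j => ?_⟩
    induction j with
    | zero => rfl
    | succ j ih => rw [hstep, ih, Function.iterate_succ_apply']
  · rintro ⟨f, hf⟩
    refine ⟨0, fun i g ⟨b, hb⟩ c hc j => ?_⟩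
    rw [natCast_rpow_natCast_add, add_zero, Nat.cast_le] at hc
    rw [hf j]
    exact (pow_dvd_pow X (Nat.mul_le_mul_right _ hc)).trans
      (X_pow_dvd_map_sub_self_expandP_iterate (σ g : E⟦X⟧ →+* E⟦X⟧) (hσC g)
        ⟨b, by rw [hb]; ring⟩ (hσX g) f j)

/-- Prop `llpsh`: let `M = lim←_ψ E[[X]]` (sequences `(m_0, m_1, …)` with
`ψ(m_{j+1}) = m_j`), with the `ℤ_pˣ`-action `(g·m)_j = g·m_j`, module structure
`(f·m)_j = φ^j(f)·m_j` and the `X`-adic valuation (`val_X m ≥ c` iff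
`X^{c·p^j} ∣ m_j` for all `j`). Then `M^{Γ_k-sh,k} = i(E[[X]])`, where
`i(f) = (f, φ(f), φ²(f), …)`. -/
theorem psi_limit_superHolder
    {p : ℕ} [Fact p.Prime] {E : Type*} [Field E] [CharP E p]
    (k : ℕ) (hk : 1 ≤ k) (hk2 : p = 2 → 2 ≤ k)
    -- the operator `ψ`, left inverse of `φ`
    (ψ : PowerSeries E → PowerSeries E)
    (hψ : ∀ F : Fin p → PowerSeries E,
      ψ (∑ i : Fin p, expandP p E (F i) * (1 + X) ^ (i : ℕ)) = F 0)
    -- the action of `ℤ_pˣ` on `E[[X]]`, `a·f(X) = f((1+X)^a - 1)`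
    (σ : ℤ_[p]ˣ →* RingAut (PowerSeries E))
    (hσX : ∀ g : ℤ_[p]ˣ, σ g X = onePlusXPow p E (g : ℤ_[p]) - 1)
    (hσC : ∀ (g : ℤ_[p]ˣ) (c : E), σ g (PowerSeries.C c) = PowerSeries.C c)
    (hσcont : ∀ (g : ℤ_[p]ˣ) (f : PowerSeries E) (n : ℕ),
      (X : PowerSeries E) ^ n ∣ f → (X : PowerSeries E) ^ n ∣ σ g f)
    (hψσ : ∀ (g : ℤ_[p]ˣ) (f : PowerSeries E), ψ (σ g f) = σ g (ψ f))
    -- an element `m` of `M = lim←_ψ E[[X]]`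
    (m : ℕ → PowerSeries E) (hm : ∀ j : ℕ, ψ (m (j + 1)) = m j) :
    (∃ mu : ℝ, ∀ (i : ℕ) (g : ℤ_[p]ˣ),
        (∃ b : ℤ_[p], (g : ℤ_[p]) = 1 + (p : ℤ_[p]) ^ (k + i) * b) →
        ∀ c : ℕ, (c : ℝ) ≤ (p : ℝ) ^ ((k : ℝ) + (i : ℝ)) + mu →
          ∀ j : ℕ, (X : PowerSeries E) ^ (c * p ^ j) ∣ (σ g (m j) - m j)) ↔
    (∃ f : PowerSeries E, ∀ j : ℕ, m j = (expandP p E)^[j] f) :=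
  psi_limit_superHolder_general k ψ hψ σ hσX hσC m hm
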